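/- arXiv:0801.3704 — 2 statements merged into one kernel-verified Lean document; each statement's English description precedes it below -/
import Mathlib

section
/- If there is a constant w > 0 such that I_1 ⊗ P_{n-1} ≤ w⁻¹ P_n for all n ≥ 2 (as positive operators on H^{⊗n}), and P_n is invertible, then ‖P_n⁻¹‖ ≤ w^{-(n-1)}. -/
set_option maxHeartbeats 1000000
set_option synthInstance.maxHeartbeats 200000


/-- The number of inversions of a permutation of `Fin n`. -/
def inversions {n : ℕ} (π : Equiv.Perm (Fin n)) : ℕ :=
  (Finset.univ.filter (fun p : Fin n × Fin n => p.1 < p.2 ∧ π p.2 < π p.1)).card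

/-- The matrix of the symmetrization operator `P_n` on `H^{⊗n}` (with `H` having
orthonormal basis indexed by `Fin m`). -/
noncomputable def symMatrix (q : ℝ) (m n : ℕ) :
    Matrix (Fin n → Fin m) (Fin n → Fin m) ℂ :=
  fun g f => ∑ π : Equiv.Perm (Fin n), (q : ℂ) ^ inversions π * (if g = f ∘ π then 1 else 0)

/-- The symmetrization operator `P_n` as a continuous linear map on `H^{⊗n}`. -/
noncomputable def symOp (q : ℝ) (m n : ℕ) :
    EuclideanSpace ℂ (Fin n → Fin m) →L[ℂ] EuclideanSpace ℂ (Fin n → Fin m) :=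
  Matrix.toEuclideanCLM (𝕜 := ℂ) (symMatrix q m n)

/-- The matrix of `I_1 ⊗ P_n` on `H^{⊗(n+1)}`. -/
noncomputable def idTensorSymMatrix (q : ℝ) (m n : ℕ) :
    Matrix (Fin (n + 1) → Fin m) (Fin (n + 1) → Fin m) ℂ :=
  fun g f => (if g 0 = f 0 then 1 else 0) *
    ∑ π : Equiv.Perm (Fin n), (q : ℂ) ^ inversions π *
      (if g ∘ Fin.succ = (f ∘ Fin.succ) ∘ π then 1 else 0)

/-- The operator `I_1 ⊗ P_n` as a continuous linear map on `H^{⊗(n+1)}`. -/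
noncomputable def idTensorSymOp (q : ℝ) (m n : ℕ) :
    EuclideanSpace ℂ (Fin (n + 1) → Fin m) →L[ℂ] EuclideanSpace ℂ (Fin (n + 1) → Fin m) :=
  Matrix.toEuclideanCLM (𝕜 := ℂ) (idTensorSymMatrix q m n)

/- ### Auxiliary lemmas -/

lemma toECLM_apply {ι : Type*} [Fintype ι] [DecidableEq ι] (M : Matrix ι ι ℂ)
    (x : EuclideanSpace ℂ ι) (i : ι) :
    (Matrix.toEuclideanCLM (𝕜 := ℂ) M x) i = ∑ j, M i j * x j := rfl

lemma euclid_inner {ι : Type*} [Fintype ι] (x y : EuclideanSpace ℂ ι) :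
    (inner ℂ x y : ℂ) = ∑ i, (starRingEnd ℂ) (x i) * y i := by
  simp [PiLp.inner_apply, RCLike.inner_apply]
  exact Finset.sum_congr rfl fun _ _ => mul_comm _ _

lemma isPositive_smul_real {E : Type*} [NormedAddCommGroup E] [InnerProductSpace ℂ E]
    [CompleteSpace E] {T : E →L[ℂ] E} (hT : T.IsPositive) {r : ℝ} (hr : 0 ≤ r) :
    (((r : ℂ)) • T).IsPositive := by
  refine ⟨ContinuousLinearMap.isSelfAdjoint_iff_isSymmetric.mp
    (IsSelfAdjoint.smul (by simp [IsSelfAdjoint, Complex.conj_ofReal]) hT.isSelfAdjoint), fun x => ?_⟩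
  have h0 := hT.2 x
  rw [ContinuousLinearMap.reApplyInnerSelf] at h0 ⊢
  rw [ContinuousLinearMap.smul_apply, inner_smul_left, Complex.conj_ofReal]
  rw [RCLike.re_to_complex] at h0 ⊢
  rw [Complex.re_ofReal_mul]
  exact mul_nonneg hr h0

lemma isSelfAdjoint_real_smul_one {E : Type*} [NormedAddCommGroup E] [InnerProductSpace ℂ E]
    [CompleteSpace E] (c : ℝ) : IsSelfAdjoint (((c : ℂ)) • (1 : E →L[ℂ] E)) :=
  IsSelfAdjoint.smul (by simp [IsSelfAdjoint, Complex.conj_ofReal]) (IsSelfAdjoint.one _)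

/-- The sliceVec of a vector on `H^{⊗(n+1)}`. -/
noncomputable def sliceVec {m n : ℕ} (x : EuclideanSpace ℂ (Fin (n + 1) → Fin m)) (i : Fin m) :
    EuclideanSpace ℂ (Fin n → Fin m) :=
  (WithLp.equiv 2 _).symm (fun f => x (Fin.cons i f))

lemma sliceVec_apply {m n : ℕ} (x : EuclideanSpace ℂ (Fin (n + 1) → Fin m)) (i : Fin m)
    (f : Fin n → Fin m) : sliceVec x i f = x (Fin.cons i f) := rfl

lemma idTensorSymMatrix_eq (q : ℝ) (m n : ℕ) (g f : Fin (n + 1) → Fin m) :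
    idTensorSymMatrix q m n g f =
      (if g 0 = f 0 then 1 else 0) * symMatrix q m n (g ∘ Fin.succ) (f ∘ Fin.succ) := rfl

lemma idTensor_apply (q : ℝ) (m n : ℕ) (x : EuclideanSpace ℂ (Fin (n + 1) → Fin m))
    (g : Fin (n + 1) → Fin m) :
    (idTensorSymOp q m n x) g = (symOp q m n (sliceVec x (g 0))) (g ∘ Fin.succ) := by
  rw [idTensorSymOp, toECLM_apply, symOp, toECLM_apply]
  rw [← Equiv.sum_comp (Fin.consEquiv (fun _ : Fin (n + 1) => Fin m))
    (fun f => idTensorSymMatrix q m n g f * x f)]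
  rw [Fintype.sum_prod_type]
  have key : ∀ p : Fin m × (Fin n → Fin m),
      idTensorSymMatrix q m n g (Fin.consEquiv _ p) * x (Fin.consEquiv _ p) =
        if g 0 = p.1 then symMatrix q m n (g ∘ Fin.succ) p.2 * sliceVec x p.1 p.2 else 0 := by
    rintro ⟨i, f⟩
    rw [idTensorSymMatrix_eq]
    have h1 : (Fin.consEquiv (fun _ : Fin (n + 1) => Fin m)) (i, f) = Fin.cons i f := rfl
    rw [h1, sliceVec_apply]
    have h2 : (Fin.cons i f : Fin (n + 1) → Fin m) 0 = i := rfl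
    have h3 : (Fin.cons i f : Fin (n + 1) → Fin m) ∘ Fin.succ = f := by
      funext j; simp [Fin.cons_succ]
    rw [h2, h3, mul_assoc, boole_mul]
  simp_rw [key]
  rw [Finset.sum_comm]
  simp [Finset.sum_ite_eq]

lemma x_eq_sliceVec {m n : ℕ} (x : EuclideanSpace ℂ (Fin (n + 1) → Fin m))
    (g : Fin (n + 1) → Fin m) : x g = sliceVec x (g 0) (g ∘ Fin.succ) := by
  rw [sliceVec_apply]
  exact congrArg x (Fin.cons_self_tail g).symm

/-- Tensoring with the identity preserves positivity of `P_n - c`. -/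
lemma tensor_isPositive (q : ℝ) (m n : ℕ) (c : ℝ)
    (hA : (symOp q m n - ((c : ℝ) : ℂ) • 1).IsPositive) :
    (idTensorSymOp q m n - ((c : ℝ) : ℂ) • 1).IsPositive := by
  -- self-adjointness
  have hPsa : IsSelfAdjoint (symOp q m n) := by
    have h2 := hA.isSelfAdjoint.add (isSelfAdjoint_real_smul_one (E := EuclideanSpace ℂ (Fin n → Fin m)) c)
    rwa [sub_add_cancel] at h2
  have hMsa : IsSelfAdjoint (symMatrix q m n) := by
    have hst : Matrix.toEuclideanCLM (𝕜 := ℂ) (star (symMatrix q m n)) =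
        Matrix.toEuclideanCLM (𝕜 := ℂ) (symMatrix q m n) := by
      rw [map_star]; exact hPsa
    exact (Matrix.toEuclideanCLM (𝕜 := ℂ)).injective hst
  have hM'sa : IsSelfAdjoint (idTensorSymMatrix q m n) := by
    have hent : ∀ g f, (starRingEnd ℂ) (symMatrix q m n f g) = symMatrix q m n g f := by
      intro g f
      have := congrFun (congrFun hMsa g) f
      simpa [Matrix.conjTranspose_apply] using this
    funext g f
    show (starRingEnd ℂ) (idTensorSymMatrix q m n f g) = idTensorSymMatrix q m n g f
    rw [idTensorSymMatrix_eq, idTensorSymMatrix_eq, map_mul, hent]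
    congr 1
    simp only [apply_ite (starRingEnd ℂ), map_one, map_zero]
    simp [eq_comm]
  have hBsa : IsSelfAdjoint (idTensorSymOp q m n) := by
    show star (idTensorSymOp q m n) = idTensorSymOp q m n
    rw [idTensorSymOp, ← map_star, hM'sa]
  refine ⟨ContinuousLinearMap.isSelfAdjoint_iff_isSymmetric.mp
    (hBsa.sub (isSelfAdjoint_real_smul_one c)), fun x => ?_⟩
  rw [ContinuousLinearMap.reApplyInnerSelf]
  set A' : EuclideanSpace ℂ (Fin n → Fin m) →L[ℂ] EuclideanSpace ℂ (Fin n → Fin m) :=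
    symOp q m n - ((c : ℝ) : ℂ) • 1 with hA'
  have key : ∀ g : Fin (n + 1) → Fin m,
      ((idTensorSymOp q m n - ((c : ℝ) : ℂ) • 1) x) g = (A' (sliceVec x (g 0))) (g ∘ Fin.succ) := by
    intro g
    rw [hA']
    rw [ContinuousLinearMap.sub_apply, ContinuousLinearMap.sub_apply,
      ContinuousLinearMap.smul_apply, ContinuousLinearMap.smul_apply,
      ContinuousLinearMap.one_apply, ContinuousLinearMap.one_apply]
    have h1 : ((((c : ℝ) : ℂ)) • x) g = ((c : ℝ) : ℂ) * x g := rfl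
    have h2 : ((((c : ℝ) : ℂ)) • sliceVec x (g 0)) (g ∘ Fin.succ) =
        ((c : ℝ) : ℂ) * sliceVec x (g 0) (g ∘ Fin.succ) := rfl
    show idTensorSymOp q m n x g - ((((c : ℝ) : ℂ)) • x) g = _
    rw [h1, idTensor_apply, x_eq_sliceVec x g]
    rfl
  have hsum : (inner ℂ ((idTensorSymOp q m n - ((c : ℝ) : ℂ) • 1) x) x : ℂ) =
      ∑ i : Fin m, inner ℂ (A' (sliceVec x i)) (sliceVec x i) := by
    rw [euclid_inner]
    simp_rw [key]
    simp_rw [x_eq_sliceVec x]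
    rw [← Equiv.sum_comp (Fin.consEquiv (fun _ : Fin (n + 1) => Fin m))]
    rw [Fintype.sum_prod_type]
    refine Finset.sum_congr rfl fun i _ => ?_
    rw [euclid_inner]
    refine Finset.sum_congr rfl fun f _ => ?_
    have h2 : (Fin.consEquiv (fun _ : Fin (n + 1) => Fin m)) (i, f) 0 = i := rfl
    have h3 : ((Fin.consEquiv (fun _ : Fin (n + 1) => Fin m)) (i, f) : Fin (n + 1) → Fin m)
        ∘ Fin.succ = f := funext fun j => @Fin.cons_succ _ (fun _ => Fin m) i f j
    rw [h2, h3]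
  rw [RCLike.re_to_complex, hsum, Complex.re_sum]
  refine Finset.sum_nonneg fun i _ => ?_
  have := hA.2 (sliceVec x i)
  rw [ContinuousLinearMap.reApplyInnerSelf, RCLike.re_to_complex] at this
  exact this

lemma symOp_one (q : ℝ) (m : ℕ) : symOp q m 1 = 1 := by
  have : symMatrix q m 1 = 1 := by
    funext g f
    rw [symMatrix]
    rw [Fintype.sum_subsingleton _ (1 : Equiv.Perm (Fin 1))]
    have hinv : inversions (1 : Equiv.Perm (Fin 1)) = 0 := by
      rw [inversions, Finset.card_eq_zero]
      ext p
      simp only [Finset.mem_filter, Finset.mem_univ, true_and, Finset.notMem_empty, iff_false]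
      rintro ⟨h1, _⟩
      exact absurd (Subsingleton.elim p.1 p.2) h1.ne
    rw [hinv, pow_zero, one_mul]
    have : f ∘ (1 : Equiv.Perm (Fin 1)) = f := rfl
    rw [this, Matrix.one_apply]
  rw [symOp, this, map_one]

lemma symOp_sub_pow_isPositive (q : ℝ) (m : ℕ) (w : ℝ) (hw : 0 < w)
    (h : ∀ k : ℕ,
      (((w⁻¹ : ℝ) : ℂ) • symOp q m (k + 2) - idTensorSymOp q m (k + 1)).IsPositive) :
    ∀ k : ℕ, (symOp q m (k + 1) - ((w ^ k : ℝ) : ℂ) • 1).IsPositive := by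
  intro k
  induction k with
  | zero =>
    have : symOp q m 1 - ((w ^ 0 : ℝ) : ℂ) • 1 = 0 := by
      rw [symOp_one]; simp
    rw [this]
    exact ContinuousLinearMap.isPositive_zero
  | succ k ih =>
    have hT := tensor_isPositive q m (k + 1) (w ^ k) ih
    have hsum := (h k).add hT
    rw [sub_add_sub_cancel] at hsum
    have hfin := isPositive_smul_real hsum hw.le
    have heq : ((w : ℝ) : ℂ) • (((w⁻¹ : ℝ) : ℂ) • symOp q m (k + 2) - ((w ^ k : ℝ) : ℂ) • 1) =
        symOp q m (k + 1 + 1) - ((w ^ (k + 1) : ℝ) : ℂ) • 1 := by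
      rw [smul_sub, smul_smul, smul_smul]
      have h1 : ((w : ℝ) : ℂ) * ((w⁻¹ : ℝ) : ℂ) = 1 := by
        push_cast
        exact mul_inv_cancel₀ (by exact_mod_cast hw.ne')
      have h2 : ((w : ℝ) : ℂ) * ((w ^ k : ℝ) : ℂ) = ((w ^ (k + 1) : ℝ) : ℂ) := by
        push_cast; ring
      rw [h1, h2, one_smul]
    rw [heq] at hfin
    exact hfin

lemma norm_ring_inverse_le {E : Type*} [NormedAddCommGroup E] [InnerProductSpace ℂ E]
    [CompleteSpace E] (T : E →L[ℂ] E) {c : ℝ} (hc : 0 < c)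
    (hpos : (T - ((c : ℝ) : ℂ) • 1).IsPositive) (hinv : IsUnit T) :
    ‖Ring.inverse T‖ ≤ c⁻¹ := by
  have hlow : ∀ x : E, c * ‖x‖ ≤ ‖T x‖ := by
    intro x
    rcases eq_or_ne x 0 with rfl | hx
    · simp
    have hxn : 0 < ‖x‖ := norm_pos_iff.2 hx
    have h0 := hpos.2 x
    rw [ContinuousLinearMap.reApplyInnerSelf] at h0
    have hre : RCLike.re (inner ℂ ((T - ((c : ℝ) : ℂ) • 1) x) x : ℂ) =
        RCLike.re (inner ℂ (T x) x : ℂ) - c * ‖x‖ ^ 2 := by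
      rw [ContinuousLinearMap.sub_apply, ContinuousLinearMap.smul_apply,
        ContinuousLinearMap.one_apply, inner_sub_left, inner_smul_left, Complex.conj_ofReal,
        map_sub]
      congr 1
      rw [RCLike.re_to_complex, Complex.re_ofReal_mul, ← RCLike.re_to_complex,
        inner_self_eq_norm_sq]
    rw [hre, sub_nonneg] at h0
    have hcs : RCLike.re (inner ℂ (T x) x : ℂ) ≤ ‖T x‖ * ‖x‖ := re_inner_le_norm (T x) x
    have : c * ‖x‖ ^ 2 ≤ ‖T x‖ * ‖x‖ := h0.trans hcs
    have := (mul_le_mul_iff_of_pos_right hxn).mpr (le_refl (c * ‖x‖))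
    nlinarith
  refine ContinuousLinearMap.opNorm_le_bound _ (inv_nonneg.2 hc.le) fun y => ?_
  have hTy : T (Ring.inverse T y) = y := by
    have := Ring.mul_inverse_cancel T hinv
    calc T (Ring.inverse T y) = (T * Ring.inverse T) y := rfl
      _ = (1 : E →L[ℂ] E) y := by rw [this]
      _ = y := rfl
  have := hlow (Ring.inverse T y)
  rw [hTy] at this
  rw [inv_mul_eq_div, le_div_iff₀ hc]
  linarith

/-- If `w > 0` and `I_1 ⊗ P_{n-1} ≤ w⁻¹ P_n` for all `n ≥ 2` (in the sense that the
difference is a positive operator), and each `P_n` is invertible, then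
`‖P_n⁻¹‖ ≤ w^{-(n-1)}`. -/
theorem norm_symOp_inv_le (q : ℝ) (hq : -1 < q) (hq' : q < 1) (m : ℕ) (w : ℝ) (hw : 0 < w)
    (h : ∀ k : ℕ,
      (((w⁻¹ : ℝ) : ℂ) • symOp q m (k + 2) - idTensorSymOp q m (k + 1)).IsPositive)
    (n : ℕ) (hn : 1 ≤ n) (hinv : IsUnit (symOp q m n)) :
    ‖Ring.inverse (symOp q m n)‖ ≤ (w⁻¹) ^ (n - 1) := by
  obtain ⟨k, rfl⟩ : ∃ k, n = k + 1 := ⟨n - 1, (Nat.succ_pred_eq_of_pos hn).symm⟩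
  have hpos := symOp_sub_pow_isPositive q m w hw h k
  have hc : (0 : ℝ) < w ^ k := pow_pos hw k
  have := norm_ring_inverse_le (symOp q m (k + 1)) hc hpos hinv
  rw [Nat.add_sub_cancel, inv_pow]
  exact this
end

section
/- Let ε_1,...,ε_d be independent Rademacher random variables and (A_1,...,A_d) a partition of {1,...,n}. For j ∈ A_k set s_j = ε_k. Then for any family of vectors (c_{j_1,...,j_d}) in a real vector space indexed by (j_1,...,j_d) ∈ {1,...,n}^d, the expectation E[ε_1⋯ε_d Σ_{j_1,...,j_d} c_{j_1,...,j_d} s_{j_1}⋯s_{j_d}] equals Σ_{ρ ∈ S_d} Σ_{j_{ρ(1)} ∈ A_1, ..., j_{ρ(d)} ∈ A_d} c_{j_1,...,j_d}, i.e. the sum over all index tuples whose components lie in d pairwise distinct blocks. -/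
open Finset


/-- Decoupling identity for `d` independent Rademacher variables. The partition of
`{1,…,n}` into blocks `A_1,…,A_d` is encoded by the block-coloring `blk : Fin n → Fin d`
(so `j ∈ A_{blk j}`), and `s_j = ε_{blk j}`. Then for any family `c` of vectors in a real
vector space `V` indexed by `d`-tuples,
`E[ε₁⋯ε_d Σ_{j₁,…,j_d} c_j s_{j₁}⋯s_{j_d}]` equals the sum of `c_j` over the tuples `j`
whose components lie in `d` pairwise distinct blocks, i.e. such that `blk ∘ j` is a
bijection of `Fin d`. The expectation over the `d` independent uniform `±1` variables is
the average over the `2^d` outcomes. -/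
theorem rademacher_decoupling (d n : ℕ) (hd : 1 ≤ d) (blk : Fin n → Fin d)
    (V : Type*) [AddCommGroup V] [Module ℝ V] (c : (Fin d → Fin n) → V) :
    ((2 : ℝ) ^ d)⁻¹ •
        ∑ ε ∈ Fintype.piFinset (fun _ : Fin d => ({-1, 1} : Finset ℝ)),
          ∑ j : Fin d → Fin n,
            ((∏ k : Fin d, ε k) * ∏ k : Fin d, ε (blk (j k))) • c j =
      ∑ j ∈ Finset.univ.filter
          (fun j : Fin d → Fin n => Function.Bijective (blk ∘ j)), c j := by
  rw [Finset.sum_comm]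
  have key : ∀ j : Fin d → Fin n,
      (∑ ε ∈ Fintype.piFinset (fun _ : Fin d => ({-1, 1} : Finset ℝ)),
        (∏ k : Fin d, ε k) * ∏ k : Fin d, ε (blk (j k))) =
      if Function.Bijective (blk ∘ j) then (2 : ℝ) ^ d else 0 := by
    intro j
    set m : Fin d → ℕ := fun i => (univ.filter fun k => blk (j k) = i).card with hm
    have h1 : ∀ ε : Fin d → ℝ,
        (∏ k : Fin d, ε k) * ∏ k : Fin d, ε (blk (j k)) =
        ∏ i : Fin d, ε i ^ (1 + m i) := by
      intro ε
      have h2 : ∏ k : Fin d, ε (blk (j k)) = ∏ i : Fin d, ε i ^ m i := by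
        rw [← Finset.prod_fiberwise univ (fun k => blk (j k)) (fun k => ε (blk (j k)))]
        refine Finset.prod_congr rfl fun i _ => ?_
        rw [Finset.prod_congr rfl (fun k hk => by rw [(Finset.mem_filter.mp hk).2]),
          Finset.prod_const]
      rw [h2, ← Finset.prod_mul_distrib]
      exact Finset.prod_congr rfl fun i _ => by rw [pow_add, pow_one]
    rw [Finset.sum_congr rfl (fun ε _ => h1 ε), ← Finset.prod_univ_sum (fun _ : Fin d => ({-1, 1} : Finset ℝ)) (fun i x => x ^ (1 + m i))]
    have hfac : ∀ i : Fin d, (∑ x ∈ ({-1, 1} : Finset ℝ), x ^ (1 + m i)) =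
        (-1 : ℝ) ^ (1 + m i) + 1 := by
      intro i
      rw [Finset.sum_pair (by norm_num), one_pow]
    rw [Finset.prod_congr rfl fun i _ => hfac i]
    by_cases hb : Function.Bijective (blk ∘ j)
    · rw [if_pos hb]
      have : ∀ i : Fin d, m i = 1 := by
        intro i
        obtain ⟨k0, hk0⟩ := hb.2 i
        rw [hm]
        apply Finset.card_eq_one.mpr
        refine ⟨k0, ?_⟩
        ext k
        simp only [Finset.mem_filter, Finset.mem_univ, true_and, Finset.mem_singleton]
        constructor
        · intro h
          exact hb.1 (show (blk ∘ j) k = (blk ∘ j) k0 from h.trans hk0.symm)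
        · intro h
          subst h
          exact hk0
      simp only [this]
      norm_num
    · rw [if_neg hb]
      have hsurj : ¬ Function.Surjective (blk ∘ j) := fun h =>
        hb (Finite.surjective_iff_bijective.mp h)
      rw [Function.Surjective] at hsurj
      push_neg at hsurj
      obtain ⟨i, hi⟩ := hsurj
      apply Finset.prod_eq_zero (Finset.mem_univ i)
      have : m i = 0 := by
        rw [hm, Finset.card_eq_zero]
        apply Finset.filter_eq_empty_iff.mpr
        intro k _
        exact fun h => hi k h
      rw [this]
      norm_num
  calc ((2 : ℝ) ^ d)⁻¹ • ∑ j : Fin d → Fin n,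
        ∑ ε ∈ Fintype.piFinset (fun _ : Fin d => ({-1, 1} : Finset ℝ)),
          ((∏ k : Fin d, ε k) * ∏ k : Fin d, ε (blk (j k))) • c j
      = ∑ j : Fin d → Fin n, (((2 : ℝ) ^ d)⁻¹ *
          (if Function.Bijective (blk ∘ j) then (2 : ℝ) ^ d else 0)) • c j := by
        rw [Finset.smul_sum]
        refine Finset.sum_congr rfl fun j _ => ?_
        rw [← Finset.sum_smul, key j, smul_smul]
    _ = ∑ j ∈ Finset.univ.filter
          (fun j : Fin d → Fin n => Function.Bijective (blk ∘ j)), c j := by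
        rw [Finset.sum_filter]
        refine Finset.sum_congr rfl fun j _ => ?_
        by_cases hb : Function.Bijective (blk ∘ j) <;>
          simp [hb, inv_mul_cancel₀ (by positivity : ((2:ℝ)^d) ≠ 0)]
end
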